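/- Let (M,τ) be a tracial von Neumann algebra represented on a Hilbert space H, and suppose ξ ∈ H is left L-bounded with ⟨aξ,ξ⟩ = τ(ab') for a positive b' ∈ M with ‖b'‖ ≤ L. Define f(t) = min(1, t^{−1/2}) on (0,L] (with f(0)=1), and set b = f(b') via functional calculus and η = bξ. Then η is left 1-bounded: for all positive a ∈ M, ⟨aη,η⟩ ≤ τ(a). -/

import Mathlib

/-!
With `b = f(b')` self-adjoint, `⟨a(bξ), bξ⟩ = ⟨(b a b)ξ, ξ⟩ = τ(b a b b') = τ(a · b b' b)` by
traciality, and `b b' b = (t ↦ f(t)² t)(b') = min(1, b') ≤ 1`. Finally `τ(a c) ≤ τ(a)` for `a ≥ 0`,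
`c ≤ 1`, because `τ(a (1 - c)) = τ(√a (1 - c) √a) ≥ 0`.
-/
open scoped InnerProductSpace

section Trace

variable {M : Type*} [CStarAlgebra M] [PartialOrder M] [StarOrderedRing M] {τ : M →ₗ[ℂ] ℂ}

lemma re_trace_mul_nonneg (hτpos : ∀ c : M, 0 ≤ c → 0 ≤ (τ c).re)
    (hτtr : ∀ x y : M, τ (x * y) = τ (y * x)) {a d : M} (ha : 0 ≤ a) (hd : 0 ≤ d) :
    0 ≤ (τ (a * d)).re := by
  set s := CFC.sqrt a
  have hs : IsSelfAdjoint s := .of_nonneg (CFC.sqrt_nonneg a)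
  have : τ (a * d) = τ (star s * d * s) := by
    rw [← CFC.sqrt_mul_sqrt_self a, mul_assoc, hτtr, hs.star_eq, mul_assoc]
  exact this ▸ hτpos _ (star_left_conjugate_nonneg hd s)

lemma re_trace_mul_le_of_le_one (hτpos : ∀ c : M, 0 ≤ c → 0 ≤ (τ c).re)
    (hτtr : ∀ x y : M, τ (x * y) = τ (y * x)) {a c : M} (ha : 0 ≤ a) (hc : c ≤ 1) :
    (τ (a * c)).re ≤ (τ a).re := by
  have := re_trace_mul_nonneg hτpos hτtr ha (sub_nonneg.mpr hc)
  rw [mul_sub, mul_one, map_sub, Complex.sub_re] at this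
  linarith

end Trace

lemma inner_map_star_mul_mul_apply {M : Type*} [CStarAlgebra M]
    {H : Type*} [NormedAddCommGroup H] [InnerProductSpace ℂ H] [CompleteSpace H]
    (π : M →⋆ₐ[ℂ] (H →L[ℂ] H)) (a b : M) (ξ : H) :
    ⟪π a (π b ξ), π b ξ⟫_ℂ = ⟪π (star b * a * b) ξ, ξ⟫_ℂ := by
  rw [map_mul, map_mul, map_star, ContinuousLinearMap.star_eq_adjoint, mul_apply_eq_comp,
    mul_apply_eq_comp, ContinuousLinearMap.adjoint_inner_left]

noncomputable def truncInvSqrt (t : ℝ) : ℝ := if t = 0 then 1 else min 1 (Real.sqrt t)⁻¹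

lemma truncInvSqrt_eq {t : ℝ} (ht : 0 ≤ t) : truncInvSqrt t = (max 1 (Real.sqrt t))⁻¹ := by
  rcases ht.eq_or_lt with rfl | ht
  · simp [truncInvSqrt]
  · rw [truncInvSqrt, if_neg ht.ne']
    rcases le_total 1 (Real.sqrt t) with h | h
    · rw [max_eq_right h, min_eq_right (inv_le_one_of_one_le₀ h)]
    · rw [max_eq_left h, inv_one, min_eq_left (one_le_inv₀ (Real.sqrt_pos.2 ht) |>.2 h)]

lemma continuousOn_truncInvSqrt : ContinuousOn truncInvSqrt (Set.Ici 0) := by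
  refine ContinuousOn.congr (f := fun t => (max 1 (Real.sqrt t))⁻¹) ?_
    fun t ht => truncInvSqrt_eq ht
  exact (continuous_const.max Real.continuous_sqrt).continuousOn.inv₀
    fun t _ => (zero_lt_one.trans_le (le_max_left _ _)).ne'

lemma truncInvSqrt_mul_self_mul {t : ℝ} (ht : 0 ≤ t) :
    truncInvSqrt t * t * truncInvSqrt t = min 1 t := by
  rw [truncInvSqrt_eq ht]
  rcases le_total 1 t with h | h
  · have hs : 1 ≤ Real.sqrt t := Real.one_le_sqrt.2 h
    have hs0 : Real.sqrt t ≠ 0 := (zero_lt_one.trans_le hs).ne'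
    rw [max_eq_right hs, min_eq_left h]
    field_simp
    exact (Real.sq_sqrt ht).symm
  · rw [max_eq_left (Real.sqrt_le_one.2 h), min_eq_right h]
    simp

section CFC

variable {M : Type*} [CStarAlgebra M] [PartialOrder M] [StarOrderedRing M]

lemma cfc_truncInvSqrt_mul_mul {b : M} (hb : 0 ≤ b) :
    cfc truncInvSqrt b * b * cfc truncInvSqrt b = cfc (fun t : ℝ => min 1 t) b := by
  have hspec : ∀ t ∈ spectrum ℝ b, 0 ≤ t := fun t ht => spectrum_nonneg_of_nonneg hb ht
  have hf : ContinuousOn truncInvSqrt (spectrum ℝ b) := continuousOn_truncInvSqrt.mono hspec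
  calc cfc truncInvSqrt b * b * cfc truncInvSqrt b
      = cfc (fun t => truncInvSqrt t * t * truncInvSqrt t) b := by
        rw [cfc_mul (fun t => truncInvSqrt t * t) _ b (hf.mul (continuousOn_id' _)) hf,
          cfc_mul truncInvSqrt (fun t => t) b hf (continuousOn_id' _), cfc_id' ℝ b]
    _ = cfc (fun t : ℝ => min 1 t) b := cfc_congr fun t ht => truncInvSqrt_mul_self_mul (hspec t ht)

end CFC

theorem statement15_general
    {M : Type*} [CStarAlgebra M] [PartialOrder M] [StarOrderedRing M]
    {H : Type*} [NormedAddCommGroup H] [InnerProductSpace ℂ H] [CompleteSpace H]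
    (π : M →⋆ₐ[ℂ] (H →L[ℂ] H)) (τ : M →ₗ[ℂ] ℂ)
    (hτpos : ∀ c : M, 0 ≤ c → 0 ≤ (τ c).re)
    (hτtr : ∀ x y : M, τ (x * y) = τ (y * x))
    (L : ℝ) (ξ : H) (b' : M) (hb'0 : 0 ≤ b')
    (hrn : ∀ a : M, 0 ≤ a → (⟪π a ξ, ξ⟫_ℂ).re = (τ (a * b')).re) :
    ∀ a : M, 0 ≤ a →
      (⟪π a (π (cfc (fun t : ℝ => if t = 0 then 1 else min 1 (Real.sqrt t)⁻¹) b') ξ),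
          π (cfc (fun t : ℝ => if t = 0 then 1 else min 1 (Real.sqrt t)⁻¹) b') ξ⟫_ℂ).re ≤
        (τ a).re := by
  intro a ha
  change (⟪π a (π (cfc truncInvSqrt b') ξ), π (cfc truncInvSqrt b') ξ⟫_ℂ).re ≤ (τ a).re
  set b := cfc truncInvSqrt b'
  have hb : star b = b := (cfc_predicate truncInvSqrt b').star_eq
  have hbab : τ (star b * a * b * b') = τ (a * (b * b' * b)) := by
    rw [hb, mul_assoc, mul_assoc, hτtr, mul_assoc, mul_assoc]
  rw [inner_map_star_mul_mul_apply, hrn _ (star_left_conjugate_nonneg ha b), hbab,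
    cfc_truncInvSqrt_mul_mul hb'0]
  exact re_trace_mul_le_of_le_one hτpos hτtr ha (cfc_le_one _ _ fun t _ => min_le_left 1 t)

/-- Let `(M,τ)` be a tracial von Neumann algebra represented on a Hilbert space `H`, and
suppose `ξ ∈ H` is left `L`-bounded with `⟨aξ, ξ⟩ = τ(a b')` for a positive `b' ∈ M` with
`‖b'‖ ≤ L`.  Define `f(t) = min(1, t^{-1/2})` (with `f(0) = 1`), set `b = f(b')` via
continuous functional calculus, and `η = bξ`.  Then `η` is left `1`-bounded: for all positive
`a ∈ M`, `⟨aη, η⟩ ≤ τ(a)`. -/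
theorem statement15
    {M : Type*} [CStarAlgebra M] [PartialOrder M] [StarOrderedRing M]
    {H : Type*} [NormedAddCommGroup H] [InnerProductSpace ℂ H] [CompleteSpace H]
    (π : M →⋆ₐ[ℂ] (H →L[ℂ] H)) (τ : M →ₗ[ℂ] ℂ)
    (hτpos : ∀ c : M, 0 ≤ c → 0 ≤ (τ c).re)
    (hτ1 : τ 1 = 1)
    (hτtr : ∀ x y : M, τ (x * y) = τ (y * x))
    (L : ℝ) (ξ : H) (b' : M) (hb'0 : 0 ≤ b') (hb'L : ‖b'‖ ≤ L)
    (hrn : ∀ a : M, 0 ≤ a → (⟪π a ξ, ξ⟫_ℂ).re = (τ (a * b')).re) :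
    ∀ a : M, 0 ≤ a →
      (⟪π a (π (cfc (fun t : ℝ => if t = 0 then 1 else min 1 (Real.sqrt t)⁻¹) b') ξ),
          π (cfc (fun t : ℝ => if t = 0 then 1 else min 1 (Real.sqrt t)⁻¹) b') ξ⟫_ℂ).re ≤
        (τ a).re :=
  statement15_general π τ hτpos hτtr L ξ b' hb'0 hrn
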